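/- Fix integers n, m ≥ 1, let 1 ≤ j ≤ n, let S = {i_1 < ⋯ < i_{n+1−j}} ∈ X_j and S' = S \ {i_1}. (i) If j is odd, then B([i_1−j, i_1−1] ∪ S') and B([i_1−j+1, i_1] ∪ S') are vertices of Λ(S); moreover, if i_1+1 ∉ S and i_1+1 ≤ n+m, then A([j−1] ∪ {i_1+1} ∪ S') is a vertex of Λ(S). (ii) If j is even, then A([j] ∪ S') and B([i_1−j+1, i_1] ∪ S') are vertices of Λ(S). -/

import Mathlib

noncomputable section
attribute [local instance] Classical.propDecidable

/-- A finite multigraph with colored edges, given by a finite vertex set `Vs` inside an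
ambient type `V` and a finite set of edges; an edge is a triple `(u, v, i)` recording its
two endpoints (in an arbitrary chosen orientation) and its color `i`.  Since every vertex
of an admissible colored multigraph is incident to at most one edge of each color, this
faithfully represents the multigraphs occurring in crystallization theory. -/
structure MG (V : Type) where
  Vs : Finset V
  Es : Finset (V × V × ℕ)

namespace MG

variable {V : Type}

/-- The edge `e` joins the vertices `u` and `v`, i.e. `φ(e) = {u, v}`. -/
def joins (e : V × V × ℕ) (u v : V) : Prop :=
  (e.1 = u ∧ e.2.1 = v) ∨ (e.1 = v ∧ e.2.1 = u)

/-- The vertex `v` is an endpoint of the edge `e`. -/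
def incid (e : V × V × ℕ) (v : V) : Prop := e.1 = v ∨ e.2.1 = v

/-- Adjacency in the spanning subgraph `G_S` of edges whose color lies in `S`. -/
def Adj (G : MG V) (S : Finset ℕ) (u v : V) : Prop :=
  u ∈ G.Vs ∧ v ∈ G.Vs ∧ ∃ e ∈ G.Es, e.2.2 ∈ S ∧ joins e u v

/-- `G.Conn S u v`: `u` and `v` are connected by a path of edges of `G_S`.
Two vertices are *disconnected* on `G_S` if `¬ G.Conn S u v`. -/
def Conn (G : MG V) (S : Finset ℕ) : V → V → Prop :=
  Relation.ReflTransGen (G.Adj S)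

/-- Well-formedness of a multigraph with colors in `K`: endpoints of edges are vertices,
there are no loops, and all colors lie in `K`. -/
def WF (K : Finset ℕ) (G : MG V) : Prop :=
  ∀ e ∈ G.Es, e.1 ∈ G.Vs ∧ e.2.1 ∈ G.Vs ∧ e.1 ≠ e.2.1 ∧ e.2.2 ∈ K

/-- Admissibility of a `K`-colored multigraph: it is (loopless and) connected, and for
each color `i ∈ K` the edges of color `i` form a perfect matching of the vertex set. -/
def Admissible (K : Finset ℕ) (G : MG V) : Prop :=
  WF K G ∧ (∀ u ∈ G.Vs, ∀ v ∈ G.Vs, G.Conn K u v) ∧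
    (∀ i ∈ K, ∀ v ∈ G.Vs, ∃! e, e ∈ G.Es ∧ e.2.2 = i ∧ incid e v)

/-- The connected component of `G_S` containing the vertex `v`. -/
def comp (G : MG V) (S : Finset ℕ) (v : V) : Set V := {w | G.Conn S v w}

/-- The poset `P_Λ` associated to a `K`-colored multigraph: its elements are pairs
`(H, S)` of a subset `S ⊆ K` and a connected component `H` of `G_S`. -/
def PElem (K : Finset ℕ) (G : MG V) : Type :=
  {p : Set V × Finset ℕ // p.2 ⊆ K ∧ ∃ v ∈ G.Vs, p.1 = G.comp p.2 v}

/-- The order of `P_Λ`: `(H, S) ≤ (H', S')` iff `S' ⊆ S` and `H' ⊆ H`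
(so that `(G, K)` is the least element). -/
instance (K : Finset ℕ) (G : MG V) : PartialOrder (PElem K G) where
  le p q := q.1.2 ⊆ p.1.2 ∧ q.1.1 ⊆ p.1.1
  le_refl p := ⟨subset_rfl, subset_rfl⟩
  le_trans p q r h₁ h₂ := ⟨h₂.1.trans h₁.1, h₂.2.trans h₁.2⟩
  le_antisymm p q h₁ h₂ :=
    Subtype.ext (Prod.ext (subset_antisymm h₂.2 h₁.2) (subset_antisymm h₂.1 h₁.1))

/-- The subgraph of `G` with vertex set `H` and the edges of `G_S` joining vertices
of `H`, viewed as an `S`-colored multigraph. -/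
def restrict (G : MG V) (S : Finset ℕ) (H : Set V) : MG V where
  Vs := G.Vs.filter (· ∈ H)
  Es := G.Es.filter fun e => e.2.2 ∈ S ∧ e.1 ∈ H ∧ e.2.1 ∈ H

/-- The cancelling `del_{x,y} Λ` of the pair of vertices `x, y` in a `K`-colored
multigraph: delete `x`, `y` and all edges incident to them, and for every color
`i ∈ K` not realized on an edge joining `x` and `y`, add a new edge of color `i`
joining the color-`i` neighbour of `x` to the color-`i` neighbour of `y`. -/
def del (K : Finset ℕ) (G : MG V) (x y : V) : MG V :=
  { Vs := G.Vs \ {x, y}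
    Es := (G.Es.filter fun e => ¬ incid e x ∧ ¬ incid e y) ∪
      ((G.Vs ×ˢ G.Vs ×ˢ
          (K \ (K.filter fun i => ∃ e ∈ G.Es, e.2.2 = i ∧ joins e x y))).filter fun q =>
        q.1 ≠ x ∧ q.1 ≠ y ∧ q.2.1 ≠ x ∧ q.2.1 ≠ y ∧
        (∃ e ∈ G.Es, e.2.2 = q.2.2 ∧ joins e x q.1) ∧
        (∃ e ∈ G.Es, e.2.2 = q.2.2 ∧ joins e y q.2.1)) }

end MG

/-- The four symbols `A`, `B`, `C`, `D` labelling the vertices of the colored graph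
`Λ(n,m)`: a vertex of `Λ(n,m)` is a pair `(X, S)` (written `X(S)` in the paper) of a
symbol `X ∈ {A,B,C,D}` and an `n`-element subset `S ⊆ {1,…,n+m}`. -/
inductive Lbl | A | B | C | D
deriving DecidableEq

/-- The `n`-element subsets of `{1,…,n+m}`. -/
def nsubs (n m : ℕ) : Finset (Finset ℕ) :=
  (Finset.Icc 1 (n+m)).powerset.filter fun S => S.card = n

/-- The vertex set of `Λ(n,m)`: all pairs `X(S)` with `X ∈ {A,B,C,D}` and `S` an
`n`-element subset of `{1,…,n+m}`. -/
def VsNM (n m : ℕ) : Finset (Lbl × Finset ℕ) :=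
  ({Lbl.A, Lbl.B, Lbl.C, Lbl.D} : Finset Lbl) ×ˢ nsubs n m

/-- The set `{k-1, k}`, interpreted as `{1}` when `k = 1` and as `{N}` when `k = N+1`. -/
def pairset (N k : ℕ) : Finset ℕ :=
  if k = 1 then {1} else if k = N + 1 then {N} else {k - 1, k}

/-- The description of the edges of `Λ(n,m)`: an edge of color `k` joins
(E1) `A(S)` and `B(S)` (or `C(S)` and `D(S)`) when `{k-1,k} ∩ S = ∅`;
(E2) `A(S)` and `C(S)` (or `B(S)` and `D(S)`) when `{k-1,k} ⊆ S`;
(E3) `X(S)` and `X((S \ {k}) ∪ {k-1})` when `2 ≤ k ≤ n+m`, `k ∈ S`, `k-1 ∉ S`. -/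
def EdgeSpec (n m : ℕ) (q : (Lbl × Finset ℕ) × (Lbl × Finset ℕ) × ℕ) : Prop :=
  ((q.1.2 = q.2.1.2 ∧ pairset (n+m) q.2.2 ∩ q.1.2 = ∅ ∧
      ((q.1.1 = Lbl.A ∧ q.2.1.1 = Lbl.B) ∨ (q.1.1 = Lbl.C ∧ q.2.1.1 = Lbl.D))) ∨
   (q.1.2 = q.2.1.2 ∧ pairset (n+m) q.2.2 ⊆ q.1.2 ∧
      ((q.1.1 = Lbl.A ∧ q.2.1.1 = Lbl.C) ∨ (q.1.1 = Lbl.B ∧ q.2.1.1 = Lbl.D))) ∨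
   (q.1.1 = q.2.1.1 ∧ 2 ≤ q.2.2 ∧ q.2.2 ≤ n+m ∧ q.2.2 ∈ q.1.2 ∧ q.2.2 - 1 ∉ q.1.2 ∧
      q.2.1.2 = insert (q.2.2 - 1) (q.1.2.erase q.2.2)))

/-- The `(n+m+1)`-colored multigraph `Λ(n,m)` (with colors `{1,…,n+m+1}`). -/
def LamNM (n m : ℕ) : MG (Lbl × Finset ℕ) where
  Vs := VsNM n m
  Es := (VsNM n m ×ˢ VsNM n m ×ˢ Finset.Icc 1 (n+m+1)).filter (EdgeSpec n m)

/-- `S ∈ X_j`, i.e. `S ⊆ {j+1,…,n+m}` and `#S = n+1-j`, for `1 ≤ j ≤ n`. -/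
def inXj (n m j : ℕ) (S : Finset ℕ) : Prop :=
  1 ≤ j ∧ j ≤ n ∧ S ⊆ Finset.Icc (j+1) (n+m) ∧ S.card = n + 1 - j

/-- `S ∈ X = X_1 ∪ ⋯ ∪ X_n`. -/
def inX (n m : ℕ) (S : Finset ℕ) : Prop := ∃ j, inXj n m j S

/-- `X` as a finite set of finsets. -/
def Xset (n m : ℕ) : Finset (Finset ℕ) :=
  (Finset.Icc 1 (n+m)).powerset.filter (inX n m)

/-- For `S = {i_1 < ⋯ < i_{n+1-j}} ∈ X_j` (where `j = n+1-#S`) and `S' = S \ {i_1}`,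
the pair `D(S) = D_j(S)` of vertices of `Λ(n,m)`:
`{A([j-1] ∪ S), A([j] ∪ S')}` if `j` is odd and `i_1 = j+1`;
`{A([j-1] ∪ S), B([i_1-j-1, i_1-2] ∪ S')}` if `j` is odd and `i_1 > j+1`;
`{B([i_1-j, i_1-2] ∪ S), B([i_1-j, i_1-1] ∪ S')}` if `j` is even. -/
def DS (n m : ℕ) (S : Finset ℕ) : (Lbl × Finset ℕ) × (Lbl × Finset ℕ) :=
  let j := n + 1 - S.card
  let i1 := if h : S.Nonempty then S.min' h else 0
  let S' := S.erase i1
  if Odd j then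
    if i1 = j + 1 then
      ((Lbl.A, Finset.Icc 1 (j-1) ∪ S), (Lbl.A, Finset.Icc 1 j ∪ S'))
    else
      ((Lbl.A, Finset.Icc 1 (j-1) ∪ S), (Lbl.B, Finset.Icc (i1-j-1) (i1-2) ∪ S'))
  else
    ((Lbl.B, Finset.Icc (i1-j) (i1-2) ∪ S), (Lbl.B, Finset.Icc (i1-j) (i1-1) ∪ S'))

/-- The binary encoding `∑_{i ∈ S} 2^i` of a finite set of naturals. -/
def binval (S : Finset ℕ) : ℕ := ∑ i ∈ S, 2 ^ i

/-- A numerical key linearizing the total order `≻` on `X`: for `S, T ∈ X`,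
`D(T) ≻ D(S)` (i.e. `D(T)` comes earlier) if and only if `key T < key S`.
(The primary comparison is by `j = n+1-#S` ascending; for equal `j`, `T >_rlex S`
holds exactly when the binary encoding of `T` is smaller than that of `S`.) -/
def key (n m : ℕ) (S : Finset ℕ) : ℕ :=
  (n + 1 - S.card) * 2 ^ (n + m + 2) + binval S

/-- `SX n m k` is the set `S ∈ X` whose pair `D(S)` is the `k`-th element `D_k` in the
total order `D_1 ≻ D_2 ≻ ⋯` (obtained by sorting the keys and decoding the `k`-th one). -/
def SX (n m k : ℕ) : Finset ℕ :=
  let kk := (((Xset n m).image (key n m)).sort (· ≤ ·)).getD (k-1) 0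
  (Finset.Icc 1 (n+m)).filter fun i => Nat.testBit (kk % 2 ^ (n + m + 2)) i

/-- The sequence of multigraphs `Λ^(1), Λ^(2), …` : `Lam0 n m (k-1) = Λ^(k)`, where
`Λ^(1) = Λ(n,m)` and `Λ^(k+1) = del_{D_k} Λ^(k)`. -/
def Lam0 (n m : ℕ) : ℕ → MG (Lbl × Finset ℕ)
  | 0 => LamNM n m
  | k + 1 => MG.del (Finset.Icc 1 (n+m+1)) (Lam0 n m k)
      (DS n m (SX n m (k+1))).1 (DS n m (SX n m (k+1))).2

/-- The number of elements `T ∈ X` with `D(T) ≻ D(S)`, i.e. cancelled before `D(S)`;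
if `D(S) = D_k` then `posIdx n m S = k - 1`. -/
def posIdx (n m : ℕ) (S : Finset ℕ) : ℕ :=
  ((Xset n m).filter fun T => key n m T < key n m S).card

/-- `Λ(S) = Λ^(k)` where `D_k = D(S)`: the multigraph to which the cancelling of the
pair `D(S)` is applied. -/
def LamS (n m : ℕ) (S : Finset ℕ) : MG (Lbl × Finset ℕ) := Lam0 n m (posIdx n m S)

/-- `Λ'(S) = Λ^(k+1) = del_{D(S)} Λ(S)` where `D_k = D(S)`. -/
def LamS' (n m : ℕ) (S : Finset ℕ) : MG (Lbl × Finset ℕ) := Lam0 n m (posIdx n m S + 1)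

/-- Two vertices `u`, `v` are directly connected on `G` by the colors `H` if for every
`i ∈ H` there is an edge of `G` of color `i` whose vertex set is `{u, v}`. -/
def dirConn {V : Type} (G : MG V) (u v : V) (H : Finset ℕ) : Prop :=
  ∀ i ∈ H, ∃ e ∈ G.Es, e.2.2 = i ∧ MG.joins e u v

/-- `color(S) = {l ∈ S : l-1 ∉ S}`. -/
def colorOf (S : Finset ℕ) : Finset ℕ := S.filter fun l => l - 1 ∉ S

/-! A vertex survives in `Λ(S)` as long as it lies in no pair `D(T)` cancelled before `D(S)`,
i.e. with `key T < key S`, which forces `j' ≤ j` for `T ∈ X_{j'}`. A vertex of a pair `D(T)`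
determines the level `j'` of `T` through the first maximal block of consecutive integers of its
set: an `A`-vertex `A([b] ∪ P)` forces `j'` odd and `j' ∈ {b, b+1}` (with `T = P` when
`j' = b + 1`), and a `B`-vertex `B([a,b] ∪ P)` forces `j' ≥ b - a + 1`, with equality only if
`T = P ∪ {s}` for some `s > b`. For the vertices in question this leaves only `j' = j` with `T`
obtained from `S` by moving its least element `i_1` upwards, so that `T` is not earlier than `S`,
or cases excluded by parity. -/

open Finset

lemma binval_lt_two_pow {T : Finset ℕ} {k : ℕ} (hT : ∀ i ∈ T, i < k) : binval T < 2 ^ k :=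
  Nat.geomSum_lt le_rfl hT

lemma testBit_binval (T : Finset ℕ) (i : ℕ) : (binval T).testBit i = true ↔ i ∈ T := by
  rw [← Nat.mem_bitIndices, ← List.mem_toFinset, binval, toFinset_bitIndices_sum_two_pow]

lemma binval_le_binval_insert_erase {S : Finset ℕ} {i s : ℕ} (hi : i ∈ S) (hs : s ∉ S.erase i)
    (his : i ≤ s) : binval S ≤ binval (insert s (S.erase i)) := by
  have hpow : 2 ^ i ≤ 2 ^ s := Nat.pow_le_pow_right two_pos his
  rw [binval, binval, sum_insert hs, ← add_sum_erase S _ hi]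
  omega

section Key

variable {n m : ℕ}

lemma key_mod_eq_binval {T : Finset ℕ} (hT : T ⊆ Icc 1 (n + m)) :
    key n m T % 2 ^ (n + m + 2) = binval T :=
  Nat.mul_add_mod_of_lt <| binval_lt_two_pow fun i hi => by
    have := (mem_Icc.1 (hT hi)).2; omega

lemma filter_testBit_key {T : Finset ℕ} (hT : T ⊆ Icc 1 (n + m)) :
    (Icc 1 (n + m)).filter (fun i => (key n m T % 2 ^ (n + m + 2)).testBit i) = T := by
  ext i
  simp only [mem_filter, key_mod_eq_binval hT, testBit_binval, and_iff_right_iff_imp]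
  exact fun hi => hT hi

lemma key_lt_key_of_lt {S T : Finset ℕ} (hS : S ⊆ Icc 1 (n + m))
    (h : n + 1 - #S < n + 1 - #T) : key n m S < key n m T := by
  have hb : binval S < 2 ^ (n + m + 2) := binval_lt_two_pow fun i hi => by
    have := (mem_Icc.1 (hS hi)).2; omega
  have hmul : (n + 1 - #S) * 2 ^ (n + m + 2) + 2 ^ (n + m + 2) ≤
      (n + 1 - #T) * 2 ^ (n + m + 2) := by
    rw [← Nat.succ_mul]; exact Nat.mul_le_mul_right _ h
  simp only [key]
  omega

lemma key_le_key_insert_erase {S : Finset ℕ} {i s : ℕ} (hi : i ∈ S) (hs : s ∉ S.erase i)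
    (his : i ≤ s) : key n m S ≤ key n m (insert s (S.erase i)) := by
  have hcard : #(insert s (S.erase i)) = #S := by
    rw [card_insert_of_notMem hs, card_erase_add_one hi]
  simp only [key, hcard]
  exact Nat.add_le_add_left (binval_le_binval_insert_erase hi hs his) _

lemma subset_Icc_of_inXj {j : ℕ} {S : Finset ℕ} (hS : inXj n m j S) : S ⊆ Icc 1 (n + m) :=
  hS.2.2.1.trans (Icc_subset_Icc (by omega) le_rfl)

lemma le_of_key_lt {j j' : ℕ} {S T : Finset ℕ} (hS : inXj n m j S) (hT : inXj n m j' T)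
    (h : key n m T < key n m S) : j' ≤ j := by
  by_contra! hjj
  refine (key_lt_key_of_lt (subset_Icc_of_inXj hS) ?_).not_gt h
  rw [hS.2.2.2, hT.2.2.2]
  have := hT.2.1
  omega

lemma subset_Icc_of_mem_Xset {T : Finset ℕ} (hT : T ∈ Xset n m) : T ⊆ Icc 1 (n + m) :=
  mem_powerset.1 (mem_filter.1 hT).1

end Key

lemma getD_sort_mem_and_lt {F : Finset ℕ} {c d i : ℕ}
    (hi : i < #(F.filter (· < c))) :
    (F.sort (· ≤ ·)).getD i d ∈ F ∧ (F.sort (· ≤ ·)).getD i d < c := by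
  have hiF : i < #F := hi.trans_le (card_filter_le _ _)
  set f := F.orderEmbOfFin rfl
  have hget : (F.sort (· ≤ ·)).getD i d = f ⟨i, hiF⟩ := by
    rw [List.getD_eq_getElem _ _ (by rwa [length_sort]), orderEmbOfFin_apply]
    rfl
  rw [hget]
  refine ⟨orderEmbOfFin_mem F rfl _, ?_⟩
  by_contra! hc
  -- every element of `F` below `c` is one of the first `i` elements of `F`
  have hsub : F.filter (· < c) ⊆ (Iio (⟨i, hiF⟩ : Fin #F)).image f := by
    intro y hy
    obtain ⟨hyF, hyc⟩ := mem_filter.1 hy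
    obtain ⟨k, rfl⟩ : y ∈ Set.range f := by rwa [range_orderEmbOfFin]
    exact mem_image_of_mem f (mem_Iio.2 (f.lt_iff_lt.1 (hyc.trans_le hc)))
  have := (card_le_card hsub).trans card_image_le
  rw [Fin.card_Iio, Fin.val_mk] at this
  omega

lemma SX_mem_Xset_and_key_lt {n m l : ℕ} {S : Finset ℕ} (hl : 1 ≤ l)
    (hlS : l ≤ posIdx n m S) : SX n m l ∈ Xset n m ∧ key n m (SX n m l) < key n m S := by
  have hinj : Set.InjOn (key n m) (Xset n m) := fun T hT T' hT' h => by
    rw [← filter_testBit_key (subset_Icc_of_mem_Xset hT), h,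
      filter_testBit_key (subset_Icc_of_mem_Xset hT')]
  have hcount : #(((Xset n m).image (key n m)).filter (· < key n m S)) = posIdx n m S := by
    rw [filter_image, card_image_of_injOn (hinj.mono (filter_subset _ _))]
    rfl
  obtain ⟨hmem, hlt⟩ := getD_sort_mem_and_lt (F := (Xset n m).image (key n m))
    (c := key n m S) (d := 0) (i := l - 1) (by omega)
  obtain ⟨T, hT, hkT⟩ := mem_image.1 hmem
  have hSX : SX n m l = T := by
    simp only [SX, ← hkT, filter_testBit_key (subset_Icc_of_mem_Xset hT)]
  rw [hSX, hkT]
  exact ⟨hT, hlt⟩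

def DSPair (n m : ℕ) (T : Finset ℕ) : Finset (Lbl × Finset ℕ) := {(DS n m T).1, (DS n m T).2}

lemma mem_Lam0_Vs {n m : ℕ} {v : Lbl × Finset ℕ} (hv : v ∈ VsNM n m) {k : ℕ}
    (h : ∀ l, 1 ≤ l → l ≤ k → v ∉ DSPair n m (SX n m l)) : v ∈ (Lam0 n m k).Vs := by
  induction k with
  | zero => exact hv
  | succ k ih =>
    have hk := h (k + 1) (by omega) le_rfl
    simp only [DSPair, mem_insert, mem_singleton, not_or] at hk
    simp only [Lam0, MG.del, mem_sdiff, mem_insert, mem_singleton, not_or]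
    exact ⟨ih fun l hl hlk => h l hl (by omega), hk⟩

lemma mem_LamS_Vs {n m : ℕ} {S : Finset ℕ} {v : Lbl × Finset ℕ} (hv : v ∈ VsNM n m)
    (h : ∀ j' T t, inXj n m j' T → t ∈ T → (∀ a ∈ T, t ≤ a) → key n m T < key n m S →
      v ∉ DSPair n m T) : v ∈ (LamS n m S).Vs := by
  refine mem_Lam0_Vs hv fun l hl hlS => ?_
  obtain ⟨hT, hkey⟩ := SX_mem_Xset_and_key_lt hl hlS
  obtain ⟨j', hj'⟩ := (mem_filter.1 hT).2
  have hne : (SX n m l).Nonempty := card_pos.1 (by rw [hj'.2.2.2]; have := hj'.2.1; omega)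
  exact h j' _ _ hj' (min'_mem _ hne) (fun a ha => min'_le _ a ha) hkey

lemma mem_VsNM_Icc_union {n m a b : ℕ} {P : Finset ℕ} (X : Lbl) (ha : 1 ≤ a) (hb : b ≤ n + m)
    (hP : P ⊆ Icc 1 (n + m)) (hPb : ∀ x ∈ P, b < x) (hcard : b + 1 - a + #P = n) :
    (X, Icc a b ∪ P) ∈ VsNM n m := by
  have hdisj : Disjoint (Icc a b) P :=
    disjoint_left.2 fun x hx hxP => (hPb x hxP).not_ge (mem_Icc.1 hx).2
  refine mem_product.2 ⟨by cases X <;> simp, mem_filter.2 ⟨mem_powerset.2 ?_, ?_⟩⟩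
  · exact union_subset (Icc_subset_Icc ha hb) hP
  · rw [card_union_of_disjoint hdisj, Nat.card_Icc, hcard]

lemma DS_eq_of_inXj {n m j t : ℕ} {T : Finset ℕ} (hT : inXj n m j T) (ht : t ∈ T)
    (htmin : ∀ a ∈ T, t ≤ a) :
    DS n m T =
      if Odd j then
        if t = j + 1 then
          ((Lbl.A, Icc 1 (j - 1) ∪ T), (Lbl.A, Icc 1 j ∪ T.erase t))
        else
          ((Lbl.A, Icc 1 (j - 1) ∪ T), (Lbl.B, Icc (t - j - 1) (t - 2) ∪ T.erase t))
      else
        ((Lbl.B, Icc (t - j) (t - 2) ∪ T), (Lbl.B, Icc (t - j) (t - 1) ∪ T.erase t)) := by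
  have hj : n + 1 - #T = j := by have := hT.2.1; rw [hT.2.2.2]; omega
  have hne : T.Nonempty := ⟨t, ht⟩
  have hmin : T.min' hne = t := le_antisymm (min'_le T t ht) (le_min' T hne t htmin)
  simp only [DS, hj, dif_pos hne, hmin]

lemma le_of_Icc_union_eq {a b d : ℕ} {P Q : Finset ℕ} (had : a ≤ d + 1)
    (hQ : ∀ x ∈ Q, d + 1 < x) (h : Icc a b ∪ P = Icc a d ∪ Q) : b ≤ d := by
  by_contra! hdb
  have hd : d + 1 ∈ Icc a d ∪ Q := h ▸ mem_union_left P (mem_Icc.2 ⟨had, hdb⟩)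
  rcases mem_union.1 hd with hd | hd
  · exact absurd (mem_Icc.1 hd).2 (by omega)
  · exact lt_irrefl _ (hQ _ hd)

lemma eq_of_Icc_union_eq {a b : ℕ} {P Q : Finset ℕ} (hP : ∀ x ∈ P, b < x)
    (hQ : ∀ x ∈ Q, b < x) (h : Icc a b ∪ P = Icc a b ∪ Q) : P = Q := by
  have hdisj : ∀ {R : Finset ℕ}, (∀ x ∈ R, b < x) → Disjoint (Icc a b) R := fun hR =>
    disjoint_left.2 fun x hx hxR => (hR x hxR).not_ge (mem_Icc.1 hx).2
  rw [← union_sdiff_cancel_left (hdisj hP), h, union_sdiff_cancel_left (hdisj hQ)]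

lemma Icc_union_inj {a b d : ℕ} {P Q : Finset ℕ} (hab : a ≤ b + 1) (had : a ≤ d + 1)
    (hP : ∀ x ∈ P, b + 1 < x) (hQ : ∀ x ∈ Q, d + 1 < x) (h : Icc a b ∪ P = Icc a d ∪ Q) :
    b = d ∧ P = Q := by
  obtain rfl : b = d := (le_of_Icc_union_eq had hQ h).antisymm (le_of_Icc_union_eq hab hP h.symm)
  exact ⟨rfl, eq_of_Icc_union_eq (fun x hx => by have := hP x hx; omega)
    (fun x hx => by have := hQ x hx; omega) h⟩

lemma Icc_union_eq_Icc_union {a b c d : ℕ} {P Q : Finset ℕ} (hab : a ≤ b) (hcd : c ≤ d)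
    (hP : ∀ x ∈ P, b < x) (hQ : ∀ x ∈ Q, d + 1 < x) (h : Icc a b ∪ P = Icc c d ∪ Q) :
    a = c ∧ b ≤ d ∧ (b = d → P = Q) := by
  have hca : c ≤ a := by
    have ha : a ∈ Icc c d ∪ Q := h ▸ mem_union_left P (mem_Icc.2 ⟨le_rfl, hab⟩)
    rcases mem_union.1 ha with ha | ha
    · exact (mem_Icc.1 ha).1
    · have := hQ a ha; omega
  have hac : a ≤ c := by
    have hc : c ∈ Icc a b ∪ P := h.symm ▸ mem_union_left Q (mem_Icc.2 ⟨le_rfl, hcd⟩)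
    rcases mem_union.1 hc with hc | hc
    · exact (mem_Icc.1 hc).1
    · have := hP c hc; omega
  obtain rfl := hac.antisymm hca
  refine ⟨rfl, le_of_Icc_union_eq (by omega) hQ h, ?_⟩
  rintro rfl
  exact eq_of_Icc_union_eq hP (fun x hx => by have := hQ x hx; omega) h

lemma lt_of_mem_erase_of_forall_le {T : Finset ℕ} {t x : ℕ} (htmin : ∀ a ∈ T, t ≤ a)
    (hx : x ∈ T.erase t) : t < x :=
  (htmin x (mem_of_mem_erase hx)).lt_of_ne (ne_of_mem_erase hx).symm

section DSPair

variable {n m j t : ℕ} {T P : Finset ℕ}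

lemma A_mem_DSPair {b : ℕ} (hT : inXj n m j T) (ht : t ∈ T) (htmin : ∀ a ∈ T, t ≤ a)
    (hP : ∀ x ∈ P, b + 1 < x) (hv : (Lbl.A, Icc 1 b ∪ P) ∈ DSPair n m T) :
    Odd j ∧ (j = b + 1 ∧ T = P ∨ j = b) := by
  have hj := hT.1
  have hfirst : Icc 1 b ∪ P = Icc 1 (j - 1) ∪ T → j = b + 1 ∧ T = P := fun h => by
    obtain ⟨hb, hPT⟩ := Icc_union_inj (by omega) (by omega) hP
      (fun x hx => by have := mem_Icc.1 (hT.2.2.1 hx); omega) h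
    exact ⟨by omega, hPT.symm⟩
  rw [DSPair, DS_eq_of_inXj hT ht htmin] at hv
  split_ifs at hv with hodd htj <;>
    simp only [mem_insert, mem_singleton, Prod.mk.injEq, reduceCtorEq, false_and, true_and,
      or_false] at hv
  · rcases hv with hv | hv
    · exact ⟨hodd, Or.inl (hfirst hv)⟩
    · obtain ⟨hb, -⟩ := Icc_union_inj (by omega) (by omega) hP
        (fun x hx => by have := lt_of_mem_erase_of_forall_le htmin hx; omega) hv
      exact ⟨hodd, Or.inr hb.symm⟩
  · exact ⟨hodd, Or.inl (hfirst hv)⟩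

lemma B_mem_DSPair {a b : ℕ} (hT : inXj n m j T) (ht : t ∈ T) (htmin : ∀ a ∈ T, t ≤ a)
    (hab : a ≤ b) (hP : ∀ x ∈ P, b < x) (hv : (Lbl.B, Icc a b ∪ P) ∈ DSPair n m T) :
    b + 1 ≤ j + a ∧ (b + 1 = j + a → ∃ s, b < s ∧ s ∉ P ∧ T = insert s P) := by
  have htj := (mem_Icc.1 (hT.2.2.1 ht)).1
  have hj := hT.1
  -- the vertices `B([t-j-1, t-2] ∪ T')` and `B([t-j, t-1] ∪ T')` of `D(T)`, `T' = T \ {t}`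
  have herase : ∀ c d, c ≤ d → j + c = d + 1 → d < t → Icc a b ∪ P = Icc c d ∪ T.erase t →
      b + 1 ≤ j + a ∧ (b + 1 = j + a → ∃ s, b < s ∧ s ∉ P ∧ T = insert s P) := by
    intro c d hcd hjc hdt h
    obtain ⟨rfl, hbd, hPT⟩ := Icc_union_eq_Icc_union hab hcd hP
      (fun x hx => by have := lt_of_mem_erase_of_forall_le htmin hx; omega) h
    refine ⟨by omega, fun _ => ⟨t, by omega, ?_, ?_⟩⟩
    · rw [hPT (by omega)]; exact notMem_erase t T
    · rw [hPT (by omega), insert_erase ht]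
  rw [DSPair, DS_eq_of_inXj hT ht htmin] at hv
  split_ifs at hv with hodd htj' <;>
    simp only [mem_insert, mem_singleton, Prod.mk.injEq, reduceCtorEq, false_and, true_and,
      or_false, false_or] at hv
  · exact herase (t - j - 1) (t - 2) (by omega) (by omega) (by omega) hv
  · have hj2 : 2 ≤ j := by
      obtain ⟨r, hr⟩ := Nat.not_odd_iff_even.1 hodd; omega
    rcases hv with hv | hv
    · obtain ⟨rfl, hbd, -⟩ := Icc_union_eq_Icc_union (c := t - j) (d := t - 2) hab (by omega) hP
        (fun x hx => by have := htmin x hx; omega) hv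
      exact ⟨by omega, fun _ => by omega⟩
    · exact herase (t - j) (t - 1) (by omega) (by omega) (by omega) hv

end DSPair

section Survivors

variable {n m j i : ℕ} {S : Finset ℕ}

lemma B_mem_LamS {a b : ℕ} (hS : inXj n m j S) (hi : i ∈ S) (hmin : ∀ a ∈ S, i ≤ a)
    (ha : 1 ≤ a) (hab : a ≤ b) (hlen : b + 1 = j + a) (hib : i ≤ b + 1) (hbi : b ≤ i) :
    (Lbl.B, Icc a b ∪ S.erase i) ∈ (LamS n m S).Vs := by
  have hgap : ∀ x ∈ S.erase i, b < x := fun x hx =>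
    hbi.trans_lt (lt_of_mem_erase_of_forall_le hmin hx)
  have hiS := mem_Icc.1 (hS.2.2.1 hi)
  refine mem_LamS_Vs (mem_VsNM_Icc_union _ ha (by omega)
    ((erase_subset i S).trans (subset_Icc_of_inXj hS)) hgap ?_) ?_
  · rw [card_erase_of_mem hi, hS.2.2.2]
    have := hS.2.1
    omega
  intro j' T t hT ht htmin hkey hv
  obtain ⟨hle, heq⟩ := B_mem_DSPair hT ht htmin hab hgap hv
  have hjj := le_of_key_lt hS hT hkey
  obtain ⟨s, hbs, hs, rfl⟩ := heq (by omega)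
  exact (key_le_key_insert_erase hi hs (by omega)).not_gt hkey

lemma A_insert_mem_LamS (hS : inXj n m j S) (hi : i ∈ S) (hmin : ∀ a ∈ S, i ≤ a)
    (hodd : Odd j) (hi1 : i + 1 ∉ S) (hin : i + 1 ≤ n + m) :
    (Lbl.A, Icc 1 (j - 1) ∪ insert (i + 1) (S.erase i)) ∈ (LamS n m S).Vs := by
  have hiS := mem_Icc.1 (hS.2.2.1 hi)
  have hgap : ∀ x ∈ insert (i + 1) (S.erase i), j - 1 + 1 < x := by
    intro x hx
    rcases mem_insert.1 hx with rfl | hx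
    · omega
    · have := lt_of_mem_erase_of_forall_le hmin hx; omega
  have hnot : i + 1 ∉ S.erase i := fun h => hi1 (mem_of_mem_erase h)
  refine mem_LamS_Vs (mem_VsNM_Icc_union _ le_rfl (by omega)
    (insert_subset (mem_Icc.2 ⟨by omega, hin⟩) ((erase_subset i S).trans (subset_Icc_of_inXj hS)))
    (fun x hx => by have := hgap x hx; omega) ?_) ?_
  · rw [card_insert_of_notMem hnot, card_erase_of_mem hi, hS.2.2.2]
    have := hS.1
    have := hS.2.1
    omega
  intro j' T t hT ht htmin hkey hv
  obtain ⟨hodd', ⟨-, rfl⟩ | hj'⟩ := A_mem_DSPair hT ht htmin hgap hv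
  · exact (key_le_key_insert_erase hi hnot (by omega)).not_gt hkey
  · obtain ⟨r, rfl⟩ := hodd
    obtain ⟨r', rfl⟩ := hodd'
    omega

lemma A_mem_LamS (hS : inXj n m j S) (hi : i ∈ S) (hmin : ∀ a ∈ S, i ≤ a) (heven : Even j) :
    (Lbl.A, Icc 1 j ∪ S.erase i) ∈ (LamS n m S).Vs := by
  have hiS := mem_Icc.1 (hS.2.2.1 hi)
  have hgap : ∀ x ∈ S.erase i, j + 1 < x := fun x hx => by
    have := lt_of_mem_erase_of_forall_le hmin hx; omega
  refine mem_LamS_Vs (mem_VsNM_Icc_union _ le_rfl (by omega)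
    ((erase_subset i S).trans (subset_Icc_of_inXj hS)) (fun x hx => by have := hgap x hx; omega)
    ?_) ?_
  · rw [card_erase_of_mem hi, hS.2.2.2]
    have := hS.2.1
    omega
  intro j' T t hT ht htmin hkey hv
  obtain ⟨hodd', ⟨hj', -⟩ | rfl⟩ := A_mem_DSPair hT ht htmin hgap hv
  · have := le_of_key_lt hS hT hkey; omega
  · exact Nat.not_even_iff_odd.2 hodd' heven

end Survivors

theorem stmt14_general (n m : ℕ) (j : ℕ) (S : Finset ℕ)
    (hS : inXj n m j S) (i1 : ℕ) (hi1 : i1 ∈ S) (hmin : ∀ a ∈ S, i1 ≤ a) :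
    (Odd j →
      ((Lbl.B, Finset.Icc (i1-j) (i1-1) ∪ S.erase i1) ∈ (LamS n m S).Vs ∧
       (Lbl.B, Finset.Icc (i1-j+1) i1 ∪ S.erase i1) ∈ (LamS n m S).Vs ∧
       (i1 + 1 ∉ S → i1 + 1 ≤ n + m →
         (Lbl.A, Finset.Icc 1 (j-1) ∪ insert (i1+1) (S.erase i1)) ∈ (LamS n m S).Vs))) ∧
    (Even j →
      ((Lbl.A, Finset.Icc 1 j ∪ S.erase i1) ∈ (LamS n m S).Vs ∧
       (Lbl.B, Finset.Icc (i1-j+1) i1 ∪ S.erase i1) ∈ (LamS n m S).Vs)) := by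
  have hj := hS.1
  have hi := (mem_Icc.1 (hS.2.2.1 hi1)).1
  refine ⟨fun hodd => ⟨?_, ?_, A_insert_mem_LamS hS hi1 hmin hodd⟩,
    fun heven => ⟨A_mem_LamS hS hi1 hmin heven, ?_⟩⟩ <;>
  exact B_mem_LamS hS hi1 hmin (by omega) (by omega) (by omega) (by omega) (by omega)

/-- Let `S = {i_1 < ⋯ < i_{n+1-j}} ∈ X_j` and `S' = S \ {i_1}`.
(i) If `j` is odd then `B([i_1-j, i_1-1] ∪ S')` and `B([i_1-j+1, i_1] ∪ S')` are vertices
of `Λ(S)`; moreover if `i_1+1 ∉ S` and `i_1+1 ≤ n+m` then `A([j-1] ∪ {i_1+1} ∪ S')` is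
a vertex of `Λ(S)`.  (ii) If `j` is even then `A([j] ∪ S')` and `B([i_1-j+1, i_1] ∪ S')`
are vertices of `Λ(S)`. -/
theorem stmt14 (n m : ℕ) (hn : 1 ≤ n) (hm : 1 ≤ m) (j : ℕ) (S : Finset ℕ)
    (hS : inXj n m j S) (i1 : ℕ) (hi1 : i1 ∈ S) (hmin : ∀ a ∈ S, i1 ≤ a) :
    (Odd j →
      ((Lbl.B, Finset.Icc (i1-j) (i1-1) ∪ S.erase i1) ∈ (LamS n m S).Vs ∧
       (Lbl.B, Finset.Icc (i1-j+1) i1 ∪ S.erase i1) ∈ (LamS n m S).Vs ∧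
       (i1 + 1 ∉ S → i1 + 1 ≤ n + m →
         (Lbl.A, Finset.Icc 1 (j-1) ∪ insert (i1+1) (S.erase i1)) ∈ (LamS n m S).Vs))) ∧
    (Even j →
      ((Lbl.A, Finset.Icc 1 j ∪ S.erase i1) ∈ (LamS n m S).Vs ∧
       (Lbl.B, Finset.Icc (i1-j+1) i1 ∪ S.erase i1) ∈ (LamS n m S).Vs)) :=
  stmt14_general n m j S hS i1 hi1 hmin
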